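/- Let T be a finite index set with positive real weights w and let n ≤ |T|. If n elements are selected sequentially without replacement, where the i-th element is chosen from T minus the previously selected elements with probability P̂(t_i | [t_0,...,t_{i-1}]; T, n), then for every n-element subset T̂ of T, the probability that the set of selected elements equals T̂ is P̃(T̂; T, n) = (∏_{i ∈ T̂} w_i) / e_n(T; w). Equivalently, the sum over all n! orderings (t_0,...,t_{n-1}) of T̂ of ∏_{i=0}^{n-1} P̂(t_i | [t_0,...,t_{i-1}]; T, n) equals (∏_{i ∈ T̂} w_i) / e_n(T; w). -/

import Mathlib

/-! The product of the `P̂` factors along any ordering `t_0, …, t_{n-1}` telescopes: the factor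
for `t_i` carries `e_{n-i-1}(T \ {t_0, …, t_i})` in its numerator, which cancels the
denominator of the next factor. What is left is `∏ w_{t_i} / (n! · e_n(T))`, independent of the
ordering, and there are `n!` orderings. -/

/-- Weighted elementary symmetric sum: `e_m(S; w) = Σ_{T̂ ⊆ S, |T̂| = m} ∏_{j ∈ T̂} w_j`. -/
noncomputable def esymm {ι : Type*} (S : Finset ι) (w : ι → ℝ) (m : ℕ) : ℝ :=
  ∑ T ∈ S.powersetCard m, ∏ j ∈ T, w j

/-- The sequential selection probability
`P̂(t | V; T, n) = w_t · e_{n-i-1}(T \ (V ∪ {t}); w) / ((n - i) · e_{n-i}(T \ V; w))`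
where `i` is the number of already-selected elements recorded in the list `V`. -/
noncomputable def Phat {ι : Type*} [DecidableEq ι] (T : Finset ι) (w : ι → ℝ) (n : ℕ)
    (V : List ι) (t : ι) : ℝ :=
  w t * esymm (T \ insert t V.toFinset) w (n - V.length - 1) /
    (((n - V.length : ℕ) : ℝ) * esymm (T \ V.toFinset) w (n - V.length))

lemma List.prod_take_get_cons {α M : Type*} [CommMonoid M] (f : List α → α → M)
    (V L : List α) (t : α) :
    ∏ i : Fin (t :: L).length, f (V ++ (t :: L).take i) ((t :: L).get i)
      = f V t * ∏ i : Fin L.length, f (V ++ [t] ++ L.take i) (L.get i) := by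
  simp only [List.length_cons]
  rw [Fin.prod_univ_succ]
  simp

lemma esymm_zero {ι : Type*} (S : Finset ι) (w : ι → ℝ) : esymm S w 0 = 1 := by
  simp [esymm]

lemma esymm_pos {ι : Type*} {S : Finset ι} {w : ι → ℝ} (hw : ∀ j ∈ S, 0 < w j)
    {m : ℕ} (hm : m ≤ S.card) : 0 < esymm S w m := by
  obtain ⟨U, hUS, hU⟩ := Finset.exists_subset_card_eq hm
  exact Finset.sum_pos (fun U hU => Finset.prod_pos fun j hj =>
      hw j ((Finset.mem_powersetCard.1 hU).1 hj))
    ⟨U, Finset.mem_powersetCard.2 ⟨hUS, hU⟩⟩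

section Telescoping

variable {ι : Type*} [DecidableEq ι] {T : Finset ι} {w : ι → ℝ} {n : ℕ}

lemma esymm_sdiff_toFinset_pos (hw : ∀ j ∈ T, 0 < w j) {V : List ι} (hV : V.Nodup)
    (hVT : V.toFinset ⊆ T) {m : ℕ} (hm : V.length + m ≤ T.card) :
    0 < esymm (T \ V.toFinset) w m := by
  refine esymm_pos (fun j hj => hw j (Finset.mem_sdiff.1 hj).1) ?_
  rw [Finset.card_sdiff_of_subset hVT, List.toFinset_card_of_nodup hV]
  omega

lemma Phat_of_length_add_succ {V : List ι} {t : ι} {k : ℕ} (h : V.length + (k + 1) = n) :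
    Phat T w n V t = w t * esymm (T \ (V ++ [t]).toFinset) w k /
      ((k + 1) * esymm (T \ V.toFinset) w (k + 1)) := by
  have hk : n - V.length = k + 1 := by omega
  have hins : insert t V.toFinset = (V ++ [t]).toFinset := by
    ext x; simp
  rw [Phat, hk, hins, Nat.add_sub_cancel]
  push_cast
  rfl

lemma prod_Phat_append (hw : ∀ j ∈ T, 0 < w j) :
    ∀ (L V : List ι), (V ++ L).Nodup → (V ++ L).toFinset ⊆ T → V.length + L.length = n →
      ∏ i : Fin L.length, Phat T w n (V ++ L.take i) (L.get i)
        = (L.map w).prod / (L.length.factorial * esymm (T \ V.toFinset) w L.length)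
  | [], V, _, _, _ => by simp [esymm_zero]
  | t :: L, V, hnd, hsub, hlen => by
    rw [List.append_cons] at hnd hsub
    have hlen' : (V ++ [t]).length + L.length = n := by simp at hlen ⊢; omega
    have hcard : V.length + (L.length + 1) ≤ T.card := by
      have := Finset.card_le_card hsub
      rw [List.toFinset_card_of_nodup hnd] at this
      simp at this
      omega
    have hVt : (V ++ [t]).Nodup := hnd.sublist (List.sublist_append_left _ _)
    have hV : V.Nodup := hVt.sublist (List.sublist_append_left _ _)
    have hVtT : (V ++ [t]).toFinset ⊆ T := fun x hx => hsub (by simp at hx ⊢; tauto)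
    have hVT : V.toFinset ⊆ T := fun x hx => hVtT (by simp at hx ⊢; tauto)
    have hnext_pos := esymm_sdiff_toFinset_pos hw hVt hVtT (m := L.length) (by simp; omega)
    have hcur_pos := esymm_sdiff_toFinset_pos hw hV hVT hcard
    rw [List.prod_take_get_cons, prod_Phat_append hw L (V ++ [t]) hnd hsub hlen',
      Phat_of_length_add_succ (by simpa using hlen)]
    simp only [List.length_cons, List.map_cons, List.prod_cons, Nat.factorial_succ]
    push_cast
    field_simp

end Telescoping

theorem sum_orderings_prod_Phat_general {ι : Type*} [DecidableEq ι] (T : Finset ι) (w : ι → ℝ)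
    (hw : ∀ j ∈ T, 0 < w j) (n : ℕ)
    (That : Finset ι) (hsub : That ⊆ T) (hcard : That.card = n) :
    ((That.toList.permutations).map
        (fun L => ∏ i : Fin L.length, Phat T w n (L.take i) (L.get i))).sum
      = (∏ i ∈ That, w i) / esymm T w n := by
  have hordering : ∀ L ∈ That.toList.permutations,
      ∏ i : Fin L.length, Phat T w n (L.take i) (L.get i)
        = (∏ i ∈ That, w i) / (n.factorial * esymm T w n) := by
    intro L hL
    have hperm : L.Perm That.toList := List.mem_permutations.1 hL
    have hnd : L.Nodup := hperm.nodup_iff.2 That.nodup_toList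
    have hset : L.toFinset = That := by
      rw [List.toFinset_eq_of_perm _ _ hperm, Finset.toList_toFinset]
    have hlen : L.length = n := by rw [hperm.length_eq, Finset.length_toList, hcard]
    simpa [hlen, ← hset, List.prod_toFinset w hnd] using
      prod_Phat_append hw L [] (by simpa using hnd) (by simpa [hset] using hsub)
        (by simpa using hlen)
  have hE : 0 < esymm T w n := esymm_pos hw (hcard ▸ Finset.card_le_card hsub)
  rw [List.sum_eq_card_nsmul _ _ (by simpa using hordering), List.length_map,
    List.length_permutations, Finset.length_toList, hcard, nsmul_eq_mul]
  field_simp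

/-- Sequential selection without replacement according to `P̂` draws each `n`-element subset
`T̂ ⊆ T` with probability `P̃(T̂; T, n) = (∏_{i ∈ T̂} w_i) / e_n(T; w)`: the sum over all `n!`
orderings `(t_0,...,t_{n-1})` of `T̂` of `∏_{i=0}^{n-1} P̂(t_i | [t_0,...,t_{i-1}]; T, n)`
equals `(∏_{i ∈ T̂} w_i) / e_n(T; w)`. -/
theorem sum_orderings_prod_Phat {ι : Type*} [DecidableEq ι] (T : Finset ι) (w : ι → ℝ)
    (hw : ∀ j ∈ T, 0 < w j) (n : ℕ) (hn : n ≤ T.card)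
    (That : Finset ι) (hsub : That ⊆ T) (hcard : That.card = n) :
    ((That.toList.permutations).map
        (fun L => ∏ i : Fin L.length, Phat T w n (L.take i) (L.get i))).sum
      = (∏ i ∈ That, w i) / esymm T w n :=
  sum_orderings_prod_Phat_general T w hw n That hsub hcard
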